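/- There exist a constant C > 0 and K₀ > 1 such that for all K ≥ K₀ and all 1 ≤ n ≤ n*(K): 1 ≤ u⁰_n ≤ C, where u⁰_n = 1 + ∑_{j=1}^{n−1} 1/(λ_j·π_j). -/

import Mathlib

open Filter MeasureTheory

noncomputable section

/-- Birth rate `λ_n = n · λ̃(n/K)`. -/
def lamK (lam : ℝ → ℝ) (K : ℝ) (n : ℕ) : ℝ := (n : ℝ) * lam ((n : ℝ) / K)

/-- Death rate `μ_n = n · μ̃(n/K)`. -/
def muK (mu : ℝ → ℝ) (K : ℝ) (n : ℕ) : ℝ := (n : ℝ) * mu ((n : ℝ) / K)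

/-- The weights `π_n = (λ₁⋯λ_{n-1})/(μ₁⋯μ_n)` (so `π₁ = 1/μ₁`). -/
def pik (lam mu : ℝ → ℝ) (K : ℝ) (n : ℕ) : ℝ :=
  (∏ j ∈ Finset.Icc 1 (n - 1), lamK lam K j) / (∏ j ∈ Finset.Icc 1 n, muK mu K j)

/-- `H(x) = ∫_{x*}^x log (μ̃(s)/λ̃(s)) ds`. -/
def Hfun (lam mu : ℝ → ℝ) (xs : ℝ) (x : ℝ) : ℝ :=
  ∫ s in xs..x, Real.log (mu s / lam s)

/-- `u⁰_n = 1 + ∑_{j=1}^{n-1} 1/(λ_j π_j)`. -/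
def u0 (lam mu : ℝ → ℝ) (K : ℝ) (n : ℕ) : ℝ :=
  1 + ∑ j ∈ Finset.Icc 1 (n - 1), 1 / (lamK lam K j * pik lam mu K j)

/-- Standing assumptions on the rate functions. -/
structure SA (lam mu : ℝ → ℝ) (xs : ℝ) : Prop where
  lam_pos : ∀ x : ℝ, 0 ≤ x → 0 < lam x
  mu_pos : ∀ x : ℝ, 0 ≤ x → 0 < mu x
  lam_diff : DifferentiableOn ℝ lam (Set.Ici (0 : ℝ))
  mu_diff : DifferentiableOn ℝ mu (Set.Ici (0 : ℝ))
  lam_mono : MonotoneOn lam (Set.Ici (0 : ℝ))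
  mu_mono : MonotoneOn mu (Set.Ici (0 : ℝ))
  ratio_lim : Tendsto (fun x : ℝ => lam x / mu x) atTop (nhds 0)
  mu0_pos : 0 < mu 0
  mu0_lt_lam0 : mu 0 < lam 0
  xs_pos : 0 < xs
  lam_eq_mu_xs : lam xs = mu xs
  xs_unique : ∀ x : ℝ, 0 < x → lam x = mu x → x = xs
  mu_logderiv_bdd : ∃ M : ℝ, ∀ x : ℝ, 0 ≤ x → deriv mu x / mu x ≤ M
  logratio_mono : MonotoneOn (fun x : ℝ => Real.log (mu x / lam x)) (Set.Ici (0 : ℝ))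

/-! With `ρ(x) = μ̃(x)/λ̃(x)`, each term of `u⁰_n` is `1/(λ_j π_j) = ∏_{i ≤ j} ρ(i/K)`.
Since `log ρ` is increasing and `ρ(x*) = 1`, every factor with `i ≤ n ≤ x* K` is at most `1`,
and those with `i ≤ m = ⌊x* K/2⌋` are at most `r = ρ(x*/2) < 1`. Hence the `j`-th term is at
most `r^min(j,m)`, and `u⁰_n ≤ 1 + 1/(1-r) + x* K r^m`, where the last summand tends to `0`
as `K → ∞`. -/

open Finset Topology

lemma one_div_lamK_mul_pik (lam mu : ℝ → ℝ) (K : ℝ) {j : ℕ} (hj : 1 ≤ j) :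
    1 / (lamK lam K j * pik lam mu K j) = ∏ i ∈ Icc 1 j, mu (i / K) / lam (i / K) := by
  obtain ⟨k, rfl⟩ := Nat.exists_eq_add_of_le' hj
  have hlamK : lamK lam K (k + 1) * ∏ i ∈ Icc 1 k, lamK lam K i =
      ∏ i ∈ Icc 1 (k + 1), lamK lam K i := by
    rw [prod_Icc_succ_top (Nat.le_add_left 1 k), mul_comm]
  rw [pik, Nat.add_sub_cancel, ← mul_div_assoc, hlamK, one_div_div, ← prod_div_distrib]
  refine prod_congr rfl fun i hi => ?_
  have hi0 : (i : ℝ) ≠ 0 := Nat.cast_ne_zero.2 (by have := (mem_Icc.1 hi).1; omega)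
  exact mul_div_mul_left _ _ hi0

lemma prod_Icc_le_pow_min {ρ : ℕ → ℝ} {r : ℝ} {j m : ℕ} (h0 : ∀ i ∈ Icc 1 j, 0 ≤ ρ i)
    (hr : ∀ i ∈ Icc 1 m, ρ i ≤ r) (h1 : ∀ i ∈ Icc 1 j, ρ i ≤ 1) :
    ∏ i ∈ Icc 1 j, ρ i ≤ r ^ min j m := by
  have hIoc : ∀ b, Icc 1 b = Ioc 0 b := Finset.Icc_succ_left_eq_Ioc 0
  rw [hIoc] at h0 h1 hr ⊢
  set k := min j m
  have hkj : k ≤ j := min_le_left j m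
  have hsub : Ioc 0 k ⊆ Ioc 0 j := Ioc_subset_Ioc_right hkj
  have hhead : ∏ i ∈ Ioc 0 k, ρ i ≤ r ^ k := by
    calc ∏ i ∈ Ioc 0 k, ρ i ≤ ∏ _i ∈ Ioc 0 k, r :=
          prod_le_prod (fun i hi => h0 i (hsub hi))
            fun i hi => hr i (Ioc_subset_Ioc_right (min_le_right j m) hi)
      _ = r ^ k := by rw [prod_const, Nat.card_Ioc, Nat.sub_zero]
  have htail : ∏ i ∈ Ioc k j, ρ i ≤ 1 :=
    prod_le_one (fun i hi => h0 i (Ioc_subset_Ioc_left k.zero_le hi))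
      fun i hi => h1 i (Ioc_subset_Ioc_left k.zero_le hi)
  rw [← prod_Ioc_consecutive ρ k.zero_le hkj]
  exact (mul_le_of_le_one_right (prod_nonneg fun i hi => h0 i (hsub hi)) htail).trans hhead

lemma sum_Icc_pow_min_le {r : ℝ} (hr0 : 0 ≤ r) (hr1 : r < 1) (m n : ℕ) :
    ∑ j ∈ Icc 1 n, r ^ min j m ≤ (1 - r)⁻¹ + n * r ^ m := by
  have hmin : ∀ j, r ^ min j m ≤ r ^ j + r ^ m := fun j => by
    rcases min_choice j m with h | h <;> rw [h] <;> linarith [pow_nonneg hr0 j, pow_nonneg hr0 m]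
  have hgeom : ∑ j ∈ Icc 1 n, r ^ j ≤ (1 - r)⁻¹ := by
    rw [← tsum_geometric_of_lt_one hr0 hr1]
    exact (summable_geometric_of_lt_one hr0 hr1).sum_le_tsum _ fun j _ => pow_nonneg hr0 j
  calc ∑ j ∈ Icc 1 n, r ^ min j m ≤ ∑ j ∈ Icc 1 n, (r ^ j + r ^ m) :=
        sum_le_sum fun j _ => hmin j
    _ = ∑ j ∈ Icc 1 n, r ^ j + n * r ^ m := by
      rw [sum_add_distrib, sum_const, Nat.card_Icc, Nat.add_sub_cancel, nsmul_eq_mul]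
    _ ≤ (1 - r)⁻¹ + n * r ^ m := by gcongr

lemma tendsto_mul_pow_floor_div {r c : ℝ} (hr0 : 0 ≤ r) (hr1 : r < 1) (hc : 0 < c) :
    Tendsto (fun x : ℝ => x * r ^ ⌊x / c⌋₊) atTop (𝓝 0) := by
  have hfloor : Tendsto (fun x : ℝ => ⌊x / c⌋₊) atTop atTop :=
    tendsto_nat_floor_atTop.comp (tendsto_id.atTop_div_const hc)
  have hgeom : Tendsto (fun m : ℕ => c * ((m + 1) * r ^ m)) atTop (𝓝 0) := by
    simpa [add_mul] using ((tendsto_self_mul_const_pow_of_lt_one hr0 hr1).add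
      (tendsto_pow_atTop_nhds_zero_of_lt_one hr0 hr1)).const_mul c
  refine squeeze_zero' ?_ ?_ (hgeom.comp hfloor)
  · filter_upwards [eventually_ge_atTop 0] with x hx using by positivity
  · filter_upwards [eventually_ge_atTop 0] with x hx
    have hx_lt : x < c * (⌊x / c⌋₊ + 1) := by
      rw [← div_lt_iff₀' hc]; exact Nat.lt_floor_add_one _
    simp only [Function.comp_apply, ← mul_assoc]
    gcongr

namespace SA

variable {lam mu : ℝ → ℝ} {xs : ℝ} (h : SA lam mu xs)
include h

lemma ratio_pos {x : ℝ} (hx : 0 ≤ x) : 0 < mu x / lam x :=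
  div_pos (h.mu_pos x hx) (h.lam_pos x hx)

lemma ratio_le_ratio {x y : ℝ} (hx : 0 ≤ x) (hxy : x ≤ y) : mu x / lam x ≤ mu y / lam y :=
  (Real.log_le_log_iff (h.ratio_pos hx) (h.ratio_pos (hx.trans hxy))).1
    (h.logratio_mono hx (hx.trans hxy) hxy)

lemma ratio_xs : mu xs / lam xs = 1 := by
  rw [h.lam_eq_mu_xs, div_self (h.mu_pos xs h.xs_pos.le).ne']

lemma ratio_le_one {x : ℝ} (hx : 0 ≤ x) (hxs : x ≤ xs) : mu x / lam x ≤ 1 :=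
  h.ratio_xs ▸ h.ratio_le_ratio hx hxs

lemma ratio_half_lt_one : mu (xs / 2) / lam (xs / 2) < 1 := by
  have hx : 0 < xs / 2 := half_pos h.xs_pos
  refine (h.ratio_le_one hx.le (half_le_self h.xs_pos.le)).lt_of_ne fun heq => ?_
  have := h.xs_unique _ hx ((div_eq_one_iff_eq (h.lam_pos _ hx.le).ne').1 heq).symm
  linarith [h.xs_pos]

lemma one_le_u0 {K : ℝ} (hK : 0 ≤ K) (n : ℕ) : 1 ≤ u0 lam mu K n := by
  refine le_add_of_nonneg_right (sum_nonneg fun j hj => ?_)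
  rw [one_div_lamK_mul_pik lam mu K (mem_Icc.1 hj).1]
  exact prod_nonneg fun i _ => (h.ratio_pos (by positivity)).le

lemma u0_le {K : ℝ} (hK : 0 < K) {n : ℕ} (hn : (n : ℝ) ≤ xs * K) :
    u0 lam mu K n ≤ 1 + ((1 - mu (xs / 2) / lam (xs / 2))⁻¹
      + xs * K * (mu (xs / 2) / lam (xs / 2)) ^ ⌊xs * K / 2⌋₊) := by
  set r := mu (xs / 2) / lam (xs / 2)
  set m := ⌊xs * K / 2⌋₊
  have hm : (m : ℝ) ≤ xs * K / 2 := Nat.floor_le (by positivity [h.xs_pos])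
  have hterm : ∀ j ∈ Icc 1 (n - 1), 1 / (lamK lam K j * pik lam mu K j) ≤ r ^ min j m := by
    intro j hj
    rw [one_div_lamK_mul_pik lam mu K (mem_Icc.1 hj).1]
    apply prod_Icc_le_pow_min
    · exact fun i _ => (h.ratio_pos (by positivity)).le
    · intro i hi
      refine h.ratio_le_ratio (by positivity) ((div_le_iff₀ hK).2 ?_)
      have : (i : ℝ) ≤ m := Nat.cast_le.2 (mem_Icc.1 hi).2
      linarith
    · intro i hi
      refine h.ratio_le_one (by positivity) ((div_le_iff₀ hK).2 ?_)
      have hij := (mem_Icc.1 hi).2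
      have hjn := (mem_Icc.1 hj).2
      have : (i : ℝ) ≤ n := Nat.cast_le.2 (by omega)
      linarith
  have hr0 : 0 ≤ r := (h.ratio_pos (half_pos h.xs_pos).le).le
  have hn' : ((n - 1 : ℕ) : ℝ) ≤ xs * K := (Nat.cast_le.2 (n.sub_le 1)).trans hn
  calc u0 lam mu K n ≤ 1 + ∑ j ∈ Icc 1 (n - 1), r ^ min j m := by
        unfold u0; gcongr with j hj; exact hterm j hj
    _ ≤ 1 + ((1 - r)⁻¹ + (n - 1 : ℕ) * r ^ m) := by
      gcongr; exact sum_Icc_pow_min_le hr0 h.ratio_half_lt_one m (n - 1)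
    _ ≤ 1 + ((1 - r)⁻¹ + xs * K * r ^ m) := by gcongr

end SA

/-- For `K` large and `1 ≤ n ≤ n*(K)`, `1 ≤ u⁰_n ≤ C`. -/
theorem stmt_16 (lam mu : ℝ → ℝ) (xs : ℝ) (hSA : SA lam mu xs) :
    ∃ C : ℝ, 0 < C ∧ ∃ K₀ : ℝ, 1 < K₀ ∧ ∀ K : ℝ, K₀ ≤ K →
      ∀ n : ℕ, 1 ≤ n → n ≤ Nat.floor (xs * K) →
        1 ≤ u0 lam mu K n ∧ u0 lam mu K n ≤ C := by
  set r := mu (xs / 2) / lam (xs / 2)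
  have hr0 : 0 ≤ r := (hSA.ratio_pos (half_pos hSA.xs_pos).le).le
  have hr1 : r < 1 := hSA.ratio_half_lt_one
  have hsmall : ∀ᶠ K in atTop, xs * K * r ^ ⌊xs * K / 2⌋₊ ≤ 1 :=
    ((tendsto_mul_pow_floor_div hr0 hr1 two_pos).comp
      (tendsto_id.const_mul_atTop hSA.xs_pos)).eventually (ge_mem_nhds one_pos)
  obtain ⟨K₁, hK₁⟩ := eventually_atTop.1 (hsmall.and (eventually_gt_atTop 0))
  refine ⟨2 + (1 - r)⁻¹, by have := sub_pos.2 hr1; positivity, max 2 K₁,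
    one_lt_two.trans_le (le_max_left 2 K₁), fun K hK n _ hn => ?_⟩
  obtain ⟨hKsmall, hK0⟩ := hK₁ K ((le_max_right 2 K₁).trans hK)
  have hnK : (n : ℝ) ≤ xs * K :=
    (Nat.cast_le.2 hn).trans (Nat.floor_le (by positivity [hSA.xs_pos]))
  refine ⟨hSA.one_le_u0 hK0.le n, ?_⟩
  linarith [hSA.u0_le hK0 hnK]
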